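/- With the stiffness matrix entries z_{i,j} defined via the weighted left and right fractional integrals of the hat-function derivatives, the strictly upper-triangular entries satisfy, for every 1 ≤ i ≤ I−3 and i+2 ≤ j ≤ I−1, z_{i,j} = ( b·(1−γ)·h^{λ−1} / Γ(λ+1) ) · [ ( 2·(j−i+1/2)^λ − (j−i−1/2)^λ − (j−i+3/2)^λ ) − ( 2·(j−i−1/2)^λ − (j−i−3/2)^λ − (j−i+1/2)^λ ) ]; in particular the left fractional integral contributes nothing to these entries. -/

import Mathlib

/-!
For `x ≤ x_{j-1}` the left integral `I_L^λ(Dφ_j)(x)` only sees the region where `Dφ_j`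
vanishes, while the right integral splits at the grid points into pieces on which `Dφ_j` is
constant, each an elementary integral of `(s - x)^{λ-1}`. At `x = (j - t)·h` with `t ≥ 1` this
gives `I_R^λ(Dφ_j)(x) = h^{λ-1}/Γ(λ+1) · (2t^λ - (t-1)^λ - (t+1)^λ)`, and the entry `z_{i,j}`
is the difference of these values at `t = j - i + 1/2` and `t = j - i - 1/2`.
-/

open MeasureTheory intervalIntegral Real

/-- Left fractional integral operator of order `lam` on `[0,1]`:
`(I_L^λ f)(x) = (1/Γ(λ)) ∫_0^x (x−s)^{λ−1} f(s) ds`. -/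
noncomputable def leftFracInt (lam : ℝ) (f : ℝ → ℝ) (x : ℝ) : ℝ :=
  (1 / Real.Gamma lam) * ∫ s in (0:ℝ)..x, (x - s) ^ (lam - 1) * f s

/-- Right fractional integral operator of order `lam` on `[0,1]`:
`(I_R^λ f)(x) = (1/Γ(λ)) ∫_x^1 (s−x)^{λ−1} f(s) ds`. -/
noncomputable def rightFracInt (lam : ℝ) (f : ℝ → ℝ) (x : ℝ) : ℝ :=
  (1 / Real.Gamma lam) * ∫ s in x..(1:ℝ), (s - x) ^ (lam - 1) * f s

/-- The a.e. derivative `Dφ_j` of the hat function `φ_j` on a uniform grid with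
spacing `h`: it equals `1/h` on `(x_{j-1}, x_j)`, `−1/h` on `(x_j, x_{j+1})`,
and `0` elsewhere, where `x_k = k·h`. -/
noncomputable def hatDeriv (h : ℝ) (j : ℕ) (s : ℝ) : ℝ :=
  if ((j : ℝ) - 1) * h < s ∧ s < (j : ℝ) * h then 1 / h
  else if (j : ℝ) * h < s ∧ s < ((j : ℝ) + 1) * h then -1 / h
  else 0

/-- The stiffness matrix entry
`z_{i,j} = b·[(γ I_L^λ + (1−γ) I_R^λ)(Dφ_j)(x_{i−1/2}) − (γ I_L^λ + (1−γ) I_R^λ)(Dφ_j)(x_{i+1/2})]`,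
where `x_{i±1/2} = (i ± 1/2)·h` are the midpoints of the grid cells. -/
noncomputable def stiff (lam gam b h : ℝ) (i j : ℕ) : ℝ :=
  b * ((gam * leftFracInt lam (hatDeriv h j) (((i : ℝ) - 1 / 2) * h)
          + (1 - gam) * rightFracInt lam (hatDeriv h j) (((i : ℝ) - 1 / 2) * h))
        - (gam * leftFracInt lam (hatDeriv h j) (((i : ℝ) + 1 / 2) * h)
          + (1 - gam) * rightFracInt lam (hatDeriv h j) (((i : ℝ) + 1 / 2) * h)))

open Set

section KernelIntegral

variable {lam x a b c : ℝ} {g : ℝ → ℝ}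

lemma intervalIntegrable_sub_rpow_mul_of_eqOn_Ioo (hlam : 0 < lam) (hab : a ≤ b)
    (hg : EqOn g (fun _ => c) (Ioo a b)) :
    IntervalIntegrable (fun s => (s - x) ^ (lam - 1) * g s) volume a b := by
  have hpow : IntervalIntegrable (fun u : ℝ => u ^ (lam - 1)) volume (a - x) (b - x) :=
    intervalIntegral.intervalIntegrable_rpow' (by linarith)
  have hkernel := (hpow.comp_sub_right x).mul_const c
  simp only [sub_add_cancel] at hkernel
  refine hkernel.congr_uIoo fun s hs => ?_
  rw [uIoo_of_le hab] at hs
  simp only [hg hs]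

lemma integral_sub_rpow_mul_of_eqOn_Ioo (hlam : 0 < lam) (hab : a ≤ b)
    (hg : EqOn g (fun _ => c) (Ioo a b)) :
    ∫ s in a..b, (s - x) ^ (lam - 1) * g s = c * (((b - x) ^ lam - (a - x) ^ lam) / lam) := by
  rw [intervalIntegral.integral_congr_Ioo_of_le hab (g := fun s => (s - x) ^ (lam - 1) * c)
      fun s hs => by simp only [hg hs],
    intervalIntegral.integral_mul_const,
    intervalIntegral.integral_comp_sub_right (fun u => u ^ (lam - 1)),
    integral_rpow (Or.inl (by linarith)), sub_add_cancel, mul_comm]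

end KernelIntegral

section HatDeriv

variable {h s : ℝ} {j : ℕ}

lemma hatDeriv_eq_zero_of_le (hs : s ≤ ((j : ℝ) - 1) * h) : hatDeriv h j s = 0 := by
  have : ¬((j : ℝ) * h < s ∧ s < ((j : ℝ) + 1) * h) := fun hs' => by nlinarith [hs'.1]
  simp [hatDeriv, hs.not_gt, this]

lemma hatDeriv_eq_zero_of_ge (hs : ((j : ℝ) + 1) * h ≤ s) : hatDeriv h j s = 0 := by
  have : ¬(((j : ℝ) - 1) * h < s ∧ s < (j : ℝ) * h) := fun hs' => by nlinarith [hs'.2]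
  simp [hatDeriv, hs.not_gt, this]

lemma hatDeriv_eq_of_mem_Ioo_left (hs : s ∈ Ioo (((j : ℝ) - 1) * h) ((j : ℝ) * h)) :
    hatDeriv h j s = 1 / h := by
  simp [hatDeriv, hs.1, hs.2]

lemma hatDeriv_eq_of_mem_Ioo_right (hs : s ∈ Ioo ((j : ℝ) * h) (((j : ℝ) + 1) * h)) :
    hatDeriv h j s = -1 / h := by
  simp [hatDeriv, hs.1, hs.2, hs.1.not_gt]

end HatDeriv

section FracIntHatDeriv

variable {lam h t : ℝ} {j : ℕ}

lemma integral_sub_rpow_mul_hatDeriv {x : ℝ} (hlam : 0 < lam) (hh : 0 < h)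
    (hx : x ≤ ((j : ℝ) - 1) * h) (hj : ((j : ℝ) + 1) * h ≤ 1) :
    ∫ s in x..1, (s - x) ^ (lam - 1) * hatDeriv h j s
      = (2 * ((j : ℝ) * h - x) ^ lam - (((j : ℝ) - 1) * h - x) ^ lam
          - (((j : ℝ) + 1) * h - x) ^ lam) / (lam * h) := by
  set A := ((j : ℝ) - 1) * h
  set B := (j : ℝ) * h
  set C := ((j : ℝ) + 1) * h
  have hAB : A ≤ B := by simp only [A, B]; nlinarith
  have hBC : B ≤ C := by simp only [B, C]; nlinarith
  have h₁ : EqOn (hatDeriv h j) (fun _ => 0) (Ioo x A) :=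
    fun s hs => hatDeriv_eq_zero_of_le hs.2.le
  have h₂ : EqOn (hatDeriv h j) (fun _ => 1 / h) (Ioo A B) :=
    fun _ hs => hatDeriv_eq_of_mem_Ioo_left hs
  have h₃ : EqOn (hatDeriv h j) (fun _ => -1 / h) (Ioo B C) :=
    fun _ hs => hatDeriv_eq_of_mem_Ioo_right hs
  have h₄ : EqOn (hatDeriv h j) (fun _ => 0) (Ioo C 1) :=
    fun s hs => hatDeriv_eq_zero_of_ge hs.1.le
  have i₁ := intervalIntegrable_sub_rpow_mul_of_eqOn_Ioo (x := x) hlam hx h₁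
  have i₂ := intervalIntegrable_sub_rpow_mul_of_eqOn_Ioo (x := x) hlam hAB h₂
  have i₃ := intervalIntegrable_sub_rpow_mul_of_eqOn_Ioo (x := x) hlam hBC h₃
  have i₄ := intervalIntegrable_sub_rpow_mul_of_eqOn_Ioo (x := x) hlam hj h₄
  rw [← intervalIntegral.integral_add_adjacent_intervals ((i₁.trans i₂).trans i₃) i₄,
    ← intervalIntegral.integral_add_adjacent_intervals (i₁.trans i₂) i₃,
    ← intervalIntegral.integral_add_adjacent_intervals i₁ i₂,
    integral_sub_rpow_mul_of_eqOn_Ioo hlam hx h₁, integral_sub_rpow_mul_of_eqOn_Ioo hlam hAB h₂,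
    integral_sub_rpow_mul_of_eqOn_Ioo hlam hBC h₃, integral_sub_rpow_mul_of_eqOn_Ioo hlam hj h₄]
  field_simp
  ring

lemma leftFracInt_hatDeriv_eq_zero (hh : 0 ≤ h) (hj : 1 ≤ j) (ht : 1 ≤ t) :
    leftFracInt lam (hatDeriv h j) (((j : ℝ) - t) * h) = 0 := by
  have hA : 0 ≤ ((j : ℝ) - 1) * h := mul_nonneg (sub_nonneg.mpr (by exact_mod_cast hj)) hh
  have hx : ((j : ℝ) - t) * h ≤ ((j : ℝ) - 1) * h := by nlinarith
  have hvanish : EqOn (fun s => (((j : ℝ) - t) * h - s) ^ (lam - 1) * hatDeriv h j s) 0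
      (uIcc 0 (((j : ℝ) - t) * h)) := fun s hs => by
    simp [hatDeriv_eq_zero_of_le (hs.2.trans (max_le hA hx))]
  simp [leftFracInt, intervalIntegral.integral_congr hvanish]

lemma rightFracInt_hatDeriv (hlam : 0 < lam) (hh : 0 < h) (hj : ((j : ℝ) + 1) * h ≤ 1)
    (ht : 1 ≤ t) :
    rightFracInt lam (hatDeriv h j) (((j : ℝ) - t) * h)
      = h ^ (lam - 1) / Real.Gamma (lam + 1)
          * (2 * t ^ lam - (t - 1) ^ lam - (t + 1) ^ lam) := by
  have hx : ((j : ℝ) - t) * h ≤ ((j : ℝ) - 1) * h := by nlinarith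
  rw [rightFracInt, integral_sub_rpow_mul_hatDeriv hlam hh hx hj,
    show (j : ℝ) * h - (j - t) * h = t * h by ring,
    show ((j : ℝ) - 1) * h - (j - t) * h = (t - 1) * h by ring,
    show ((j : ℝ) + 1) * h - (j - t) * h = (t + 1) * h by ring,
    Real.mul_rpow (by linarith) hh.le, Real.mul_rpow (by linarith) hh.le,
    Real.mul_rpow (by linarith) hh.le, Real.Gamma_add_one hlam.ne', Real.rpow_sub_one hh.ne']
  have := (Real.Gamma_pos_of_pos hlam).ne'
  field_simp

end FracIntHatDeriv

theorem stiffness_upper_triangular_general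
    (lam gam b : ℝ) (hlam0 : 0 < lam)
    (I : ℕ) (h : ℝ) (hh : h = 1 / (I : ℝ))
    (i j : ℕ) (hj1 : i + 2 ≤ j) (hj2 : j ≤ I - 1) :
    stiff lam gam b h i j
      = (b * (1 - gam) * h ^ (lam - 1) / Real.Gamma (lam + 1))
        * ((2 * ((j : ℝ) - (i : ℝ) + 1 / 2) ^ lam
              - ((j : ℝ) - (i : ℝ) - 1 / 2) ^ lam
              - ((j : ℝ) - (i : ℝ) + 3 / 2) ^ lam)
          - (2 * ((j : ℝ) - (i : ℝ) - 1 / 2) ^ lam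
              - ((j : ℝ) - (i : ℝ) - 3 / 2) ^ lam
              - ((j : ℝ) - (i : ℝ) + 1 / 2) ^ lam)) := by
  have hjI : (j : ℝ) + 1 ≤ I := by exact_mod_cast (by omega : j + 1 ≤ I)
  have hij : (i : ℝ) + 2 ≤ j := by exact_mod_cast hj1
  have hhpos : 0 < h := by rw [hh]; exact one_div_pos.mpr (by linarith)
  have hjh : ((j : ℝ) + 1) * h ≤ 1 := by
    rw [hh, mul_one_div, div_le_one (by linarith)]; exact hjI
  set d := (j : ℝ) - i
  have hx₁ : ((i : ℝ) - 1 / 2) * h = ((j : ℝ) - (d + 1 / 2)) * h := by ring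
  have hx₂ : ((i : ℝ) + 1 / 2) * h = ((j : ℝ) - (d - 1 / 2)) * h := by ring
  rw [stiff, hx₁, hx₂,
    leftFracInt_hatDeriv_eq_zero hhpos.le (by omega) (by linarith),
    leftFracInt_hatDeriv_eq_zero hhpos.le (by omega) (by linarith),
    rightFracInt_hatDeriv hlam0 hhpos hjh (by linarith),
    rightFracInt_hatDeriv hlam0 hhpos hjh (by linarith),
    show d + 1 / 2 - 1 = d - 1 / 2 by ring, show d + 1 / 2 + 1 = d + 3 / 2 by ring,
    show d - 1 / 2 - 1 = d - 3 / 2 by ring, show d - 1 / 2 + 1 = d + 1 / 2 by ring]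
  ring

/-- Strictly upper-triangular entries of the stiffness matrix; in particular
the left fractional integral contributes nothing to these entries. -/
theorem stiffness_upper_triangular
    (lam gam b : ℝ) (hlam0 : 0 < lam) (hlam1 : lam < 1)
    (hgam : gam ∈ Set.Icc (0:ℝ) 1) (hb : 0 < b)
    (I : ℕ) (hI : 4 ≤ I) (h : ℝ) (hh : h = 1 / (I : ℝ))
    (i j : ℕ) (hi1 : 1 ≤ i) (hi2 : i ≤ I - 3) (hj1 : i + 2 ≤ j) (hj2 : j ≤ I - 1) :
    stiff lam gam b h i j
      = (b * (1 - gam) * h ^ (lam - 1) / Real.Gamma (lam + 1))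
        * ((2 * ((j : ℝ) - (i : ℝ) + 1 / 2) ^ lam
              - ((j : ℝ) - (i : ℝ) - 1 / 2) ^ lam
              - ((j : ℝ) - (i : ℝ) + 3 / 2) ^ lam)
          - (2 * ((j : ℝ) - (i : ℝ) - 1 / 2) ^ lam
              - ((j : ℝ) - (i : ℝ) - 3 / 2) ^ lam
              - ((j : ℝ) - (i : ℝ) + 1 / 2) ^ lam)) :=
  stiffness_upper_triangular_general lam gam b hlam0 I h hh i j hj1 hj2
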